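/- Let I, J, K be monomial ideals with I = J + K and G(I) the disjoint union of G(J) and G(K). Then I = J + K is a Betti splitting if and only if for all i and all multidegrees j, the connecting map Tor_i(k, J∩K)_j → Tor_i(k, J)_j ⊕ Tor_i(k, K)_j induced by the short exact sequence 0 → J∩K → J ⊕ K → I → 0 is the zero map. -/
import Mathlib

set_option linter.unusedSectionVars false

open MvPolynomial

variable (k : Type*) [Field k] (σ : Type*) [Fintype σ] [DecidableEq σ] [LinearOrder σ]

/-- The Koszul differential on chains `c : Finset σ → R`. -/
noncomputable def koszulD :
    (Finset σ → MvPolynomial σ k) →ₗ[k] (Finset σ → MvPolynomial σ k) where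
  toFun c := fun S => ∑ t ∈ Sᶜ,
    (-1 : MvPolynomial σ k) ^ (S.filter (fun s => s < t)).card * (X t * c (insert t S))
  map_add' c d := by
    funext S
    simp [mul_add, Finset.sum_add_distrib]
  map_smul' a c := by
    funext S
    simp [Finset.smul_sum, mul_smul_comm]

/-- The multidegree-`j` piece of the `i`-th term of the Koszul complex tensored with
the ideal `I`: functions assigning to each `i`-element subset `S` of the variables an
element of `I` that is homogeneous of multidegree `j - deg S`. -/
noncomputable def kChain (I : Ideal (MvPolynomial σ k)) (i : ℕ) (j : σ →₀ ℕ) :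
    Submodule k (Finset σ → MvPolynomial σ k) where
  carrier := {c | ∀ S : Finset σ,
    (S.card ≠ i → c S = 0) ∧ c S ∈ I ∧
    ∀ m ∈ (c S).support, m + ∑ t ∈ S, Finsupp.single t 1 = j}
  zero_mem' := by intro S; simp
  add_mem' := by
    intro c d hc hd S
    refine ⟨fun h => by simp [ (hc S).1 h, (hd S).1 h], I.add_mem (hc S).2.1 (hd S).2.1,
      fun m hm => ?_⟩
    rcases Finset.mem_union.mp (MvPolynomial.support_add hm) with h | h
    · exact (hc S).2.2 m h
    · exact (hd S).2.2 m h
  smul_mem' := by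
    intro a c hc S
    refine ⟨fun h => by simp [(hc S).1 h], I.smul_of_tower_mem a (hc S).2.1,
      fun m hm => (hc S).2.2 m (MvPolynomial.support_smul hm)⟩

/-- Koszul cycles in homological degree `i`, multidegree `j`. -/
noncomputable def koszulCycles (I : Ideal (MvPolynomial σ k)) (i : ℕ) (j : σ →₀ ℕ) :
    Submodule k (Finset σ → MvPolynomial σ k) :=
  kChain k σ I i j ⊓ LinearMap.ker (koszulD k σ)

/-- The multidegree-`j` piece of `Tor_i(k, I)`, computed as Koszul homology. -/
noncomputable abbrev koszulHomology (I : Ideal (MvPolynomial σ k)) (i : ℕ) (j : σ →₀ ℕ) :=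
  ↥(koszulCycles k σ I i j) ⧸
    (Submodule.comap (koszulCycles k σ I i j).subtype
      ((kChain k σ I (i + 1) j).map (koszulD k σ)))

/-- The multigraded Betti number `β_{i,j}(I) = dim_k Tor_i(k,I)_j`. -/
noncomputable def bettiNumber (I : Ideal (MvPolynomial σ k)) (i : ℕ) (j : σ →₀ ℕ) : ℕ :=
  Module.finrank k (koszulHomology k σ I i j)

/-- The graded Betti number `β_{i,d}(I)`, the sum of the multigraded Betti numbers over
all multidegrees of total degree `d`. -/
noncomputable def bettiNumberGr (I : Ideal (MvPolynomial σ k)) (i : ℕ) (d : ℕ) : ℕ :=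
  ∑ᶠ j ∈ {j : σ →₀ ℕ | (j.sum fun _ e => e) = d}, bettiNumber k σ I i j

/-- The total Betti number `β_i(I)`. -/
noncomputable def bettiTotal (I : Ideal (MvPolynomial σ k)) (i : ℕ) : ℕ :=
  ∑ᶠ j : σ →₀ ℕ, bettiNumber k σ I i j

/-- A monomial ideal. -/
def IsMonomialIdeal (I : Ideal (MvPolynomial σ k)) : Prop :=
  ∃ S : Set (σ →₀ ℕ), I = Ideal.span ((fun m => (monomial m (1 : k) : MvPolynomial σ k)) '' S)

/-- The exponent vectors of the unique minimal monomial generating set `G(I)` of a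
monomial ideal: monomials of `I` none of whose proper divisors lies in `I`. -/
def minGens (I : Ideal (MvPolynomial σ k)) : Set (σ →₀ ℕ) :=
  {m | (monomial m (1 : k) : MvPolynomial σ k) ∈ I ∧
    ∀ m' : σ →₀ ℕ, m' ≤ m → m' ≠ m → (monomial m' (1 : k) : MvPolynomial σ k) ∉ I}

lemma kChain_mono {I I' : Ideal (MvPolynomial σ k)} (h : I ≤ I') (i : ℕ) (j : σ →₀ ℕ) :
    kChain k σ I i j ≤ kChain k σ I' i j := by
  intro c hc S
  exact ⟨(hc S).1, h (hc S).2.1, (hc S).2.2⟩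

lemma koszulCycles_mono {I I' : Ideal (MvPolynomial σ k)} (h : I ≤ I') (i : ℕ) (j : σ →₀ ℕ) :
    koszulCycles k σ I i j ≤ koszulCycles k σ I' i j :=
  inf_le_inf (kChain_mono k σ h i j) le_rfl

/-- The map `Tor_i(k,I)_j → Tor_i(k,I')_j` induced by an inclusion of ideals `I ≤ I'`. -/
noncomputable def koszulHomologyMap {I I' : Ideal (MvPolynomial σ k)} (h : I ≤ I')
    (i : ℕ) (j : σ →₀ ℕ) : koszulHomology k σ I i j →ₗ[k] koszulHomology k σ I' i j :=
  Submodule.mapQ _ _ (Submodule.inclusion (koszulCycles_mono k σ h i j)) (by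
    intro x hx
    simp only [Submodule.mem_comap] at hx ⊢
    exact Submodule.map_mono (kChain_mono k σ h (i + 1) j) hx)

/-- `I = J + K` is a Betti splitting:
`β_{i,j}(I) = β_{i,j}(J) + β_{i,j}(K) + β_{i-1,j}(J ∩ K)` for all `i` and multidegrees `j`
(with the convention `β_{-1,j} = 0`). -/
def IsBettiSplitting (J K : Ideal (MvPolynomial σ k)) : Prop :=
  ∀ (i : ℕ) (j : σ →₀ ℕ),
    bettiNumber k σ (J + K) i j =
      bettiNumber k σ J i j + bettiNumber k σ K i j +
        (if i = 0 then 0 else bettiNumber k σ (J ⊓ K) (i - 1) j)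

lemma koszulD_apply (c : Finset σ → MvPolynomial σ k) (S : Finset σ) :
    koszulD k σ c S = ∑ t ∈ Sᶜ,
      (-1 : MvPolynomial σ k) ^ (S.filter (fun s => s < t)).card * (X t * c (insert t S)) := rfl

lemma filter_lt_insert_card (S : Finset σ) {t : σ} (ht : t ∉ S) (u : σ) :
    ((insert t S).filter (fun s => s < u)).card
      = (S.filter (fun s => s < u)).card + if t < u then 1 else 0 := by
  rw [Finset.filter_insert]
  split_ifs with h
  · rw [Finset.card_insert_of_notMem (fun hc => ht (Finset.mem_of_mem_filter _ hc))]
  · simp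

lemma koszulD_sq (c : Finset σ → MvPolynomial σ k) : koszulD k σ (koszulD k σ c) = 0 := by
  classical
  funext S
  set G : σ × σ → MvPolynomial σ k := fun p =>
    (-1) ^ ((S.filter (fun s => s < p.1)).card + (S.filter (fun s => s < p.2)).card
        + if p.1 < p.2 then 1 else 0) * (X p.1 * (X p.2 * c (insert p.2 (insert p.1 S)))) with hG
  have hrw : ∀ t ∈ Sᶜ, (-1 : MvPolynomial σ k) ^ (S.filter (fun s => s < t)).card
      * (X t * koszulD k σ c (insert t S)) = ∑ u ∈ Sᶜ.erase t, G (t, u) := by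
    intro t ht
    rw [koszulD_apply, Finset.mul_sum, Finset.mul_sum, Finset.compl_insert]
    refine Finset.sum_congr rfl fun u hu => ?_
    rw [hG]
    simp only
    rw [filter_lt_insert_card σ S (Finset.mem_compl.mp ht) u, pow_add, pow_add]
    ring
  have h1 : koszulD k σ (koszulD k σ c) S = ∑ t ∈ Sᶜ, ∑ u ∈ Sᶜ.erase t, G (t, u) :=
    Finset.sum_congr rfl hrw
  have h2 : ∑ t ∈ Sᶜ, ∑ u ∈ Sᶜ.erase t, G (t, u)
      = ∑ p ∈ (Sᶜ ×ˢ Sᶜ).filter (fun p => p.2 ≠ p.1), G p := by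
    rw [Finset.sum_filter, Finset.sum_product]
    refine Finset.sum_congr rfl fun t _ => ?_
    rw [← Finset.filter_ne' Sᶜ t, Finset.sum_filter]
  have h3 : ∑ p ∈ (Sᶜ ×ˢ Sᶜ).filter (fun p => p.2 ≠ p.1), G p = 0 := by
    refine Finset.sum_involution (fun p _ => p.swap) ?_ ?_ ?_ ?_
    · rintro ⟨t, u⟩ hp
      have hut : u ≠ t := (Finset.mem_filter.mp hp).2
      have hins : insert u (insert t S) = insert t (insert u S) := Finset.insert_comm _ _ _
      rw [hG]
      simp only [Prod.swap_prod_mk, hins]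
      rcases hut.lt_or_gt with h | h
      · rw [if_neg (not_lt.mpr h.le), if_pos h, pow_succ]
        ring
      · rw [if_pos h, if_neg (not_lt.mpr h.le), pow_succ]
        ring
    · rintro ⟨t, u⟩ hp _
      have hut : u ≠ t := (Finset.mem_filter.mp hp).2
      simp only [Prod.swap_prod_mk, ne_eq, Prod.mk.injEq, not_and]
      intro h; exact absurd h hut
    · rintro ⟨t, u⟩ hp
      simp only [Finset.mem_filter, Finset.mem_product] at hp ⊢
      exact ⟨⟨hp.1.2, hp.1.1⟩, hp.2.symm⟩
    · rintro ⟨t, u⟩ _; rfl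
  show koszulD k σ (koszulD k σ c) S = 0
  rw [h1, h2, h3]

lemma koszulD_mem_kChain {L : Ideal (MvPolynomial σ k)} {i : ℕ} {j : σ →₀ ℕ}
    {c : Finset σ → MvPolynomial σ k} (hc : c ∈ kChain k σ L (i + 1) j) :
    koszulD k σ c ∈ kChain k σ L i j := by
  intro S
  refine ⟨?_, ?_, ?_⟩
  · intro hS
    rw [koszulD_apply]
    refine Finset.sum_eq_zero fun t ht => ?_
    have hcard : (insert t S).card ≠ i + 1 := by
      rw [Finset.card_insert_of_notMem (Finset.mem_compl.mp ht)]; omega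
    rw [(hc (insert t S)).1 hcard, mul_zero, mul_zero]
  · rw [koszulD_apply]
    exact Ideal.sum_mem _ fun t _ =>
      Ideal.mul_mem_left _ _ (Ideal.mul_mem_left _ _ (hc (insert t S)).2.1)
  · intro m hm
    rw [koszulD_apply] at hm
    have hm' := MvPolynomial.mem_support_iff.mp hm
    rw [MvPolynomial.coeff_sum] at hm'
    obtain ⟨t, ht, hne⟩ := Finset.exists_ne_zero_of_sum_ne_zero hm'
    have hC : ((-1 : MvPolynomial σ k) ^ (S.filter (fun s => s < t)).card)
        = C ((-1 : k) ^ (S.filter (fun s => s < t)).card) := by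
      rw [map_pow, map_neg, map_one]
    rw [hC, MvPolynomial.coeff_C_mul] at hne
    have hmem : m ∈ (X t * c (insert t S)).support := by
      rw [MvPolynomial.mem_support_iff]
      intro h0; rw [h0, mul_zero] at hne; exact hne rfl
    rw [MvPolynomial.support_X_mul, Finset.mem_map] at hmem
    obtain ⟨m', hm'', rfl⟩ := hmem
    have hj := (hc (insert t S)).2.2 m' hm''
    rw [Finset.sum_insert (Finset.mem_compl.mp ht)] at hj
    show addLeftEmbedding (Finsupp.single t 1) m' + ∑ u ∈ S, Finsupp.single u 1 = j
    rw [← hj, addLeftEmbedding_apply]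
    abel

lemma koszulD_kChain_zero {L : Ideal (MvPolynomial σ k)} {j : σ →₀ ℕ}
    {c : Finset σ → MvPolynomial σ k} (hc : c ∈ kChain k σ L 0 j) :
    koszulD k σ c = 0 := by
  funext S
  show koszulD k σ c S = 0
  rw [koszulD_apply]
  refine Finset.sum_eq_zero fun t ht => ?_
  rw [(hc (insert t S)).1 (by simp), mul_zero, mul_zero]

/-- The linear map reading off the (unique possible) coefficient of each component. -/
noncomputable def kCoeff (j : σ →₀ ℕ) :
    (Finset σ → MvPolynomial σ k) →ₗ[k] (Finset σ → k) where
  toFun c := fun S => MvPolynomial.coeff (j - ∑ t ∈ S, Finsupp.single t 1) (c S)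
  map_add' c d := by funext S; simp [MvPolynomial.coeff_add]
  map_smul' a c := by funext S; simp [MvPolynomial.coeff_smul]

instance kChain_finiteDimensional (L : Ideal (MvPolynomial σ k)) (i : ℕ) (j : σ →₀ ℕ) :
    FiniteDimensional k ↥(kChain k σ L i j) := by
  refine FiniteDimensional.of_injective ((kCoeff k σ j).comp (kChain k σ L i j).subtype) ?_
  rw [← LinearMap.ker_eq_bot]
  refine (Submodule.eq_bot_iff _).mpr fun c hc => ?_
  have hc' : ∀ S, MvPolynomial.coeff (j - ∑ t ∈ S, Finsupp.single t 1)
      ((c : Finset σ → MvPolynomial σ k) S) = 0 :=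
    fun S => congrFun (LinearMap.mem_ker.mp hc) S
  suffices hz : ∀ S, (c : Finset σ → MvPolynomial σ k) S = 0 from Subtype.ext (funext hz)
  intro S
  rw [← MvPolynomial.support_eq_empty, Finset.eq_empty_iff_forall_notMem]
  intro m hm
  have hj := (c.2 S).2.2 m hm
  have heq : j - ∑ t ∈ S, Finsupp.single t 1 = m := by
    rw [← hj, add_tsub_cancel_right]
  have h0 := hc' S
  rw [heq] at h0
  exact MvPolynomial.mem_support_iff.mp hm h0

instance kBoundary_finiteDimensional (L : Ideal (MvPolynomial σ k)) (i : ℕ) (j : σ →₀ ℕ) :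
    FiniteDimensional k ↥((kChain k σ L i j).map (koszulD k σ)) := by
  have h : (kChain k σ L i j).map (koszulD k σ)
      = LinearMap.range ((koszulD k σ).comp (kChain k σ L i j).subtype) := by
    rw [LinearMap.range_comp, Submodule.range_subtype]
  rw [h]
  infer_instance

instance koszulCycles_finiteDimensional (L : Ideal (MvPolynomial σ k)) (i : ℕ) (j : σ →₀ ℕ) :
    FiniteDimensional k ↥(koszulCycles k σ L i j) :=
  Submodule.finiteDimensional_of_le
    (show koszulCycles k σ L i j ≤ kChain k σ L i j from inf_le_left)

open Module in
lemma rank_nullity_kChain (L : Ideal (MvPolynomial σ k)) (i : ℕ) (j : σ →₀ ℕ) :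
    finrank k ↥(kChain k σ L i j)
      = finrank k ↥(koszulCycles k σ L i j)
        + finrank k ↥((kChain k σ L i j).map (koszulD k σ)) := by
  have h := LinearMap.finrank_range_add_finrank_ker ((koszulD k σ).comp (kChain k σ L i j).subtype)
  rw [LinearMap.range_comp, Submodule.range_subtype, LinearMap.ker_comp] at h
  have h2 : finrank k ↥(Submodule.comap (kChain k σ L i j).subtype (LinearMap.ker (koszulD k σ)))
      = finrank k ↥(koszulCycles k σ L i j) := by
    rw [← Submodule.finrank_map_subtype_eq (kChain k σ L i j), Submodule.map_comap_subtype]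
    rfl
  rw [h2] at h
  omega

open Module in
lemma betti_add_boundary (L : Ideal (MvPolynomial σ k)) (i : ℕ) (j : σ →₀ ℕ) :
    bettiNumber k σ L i j + finrank k ↥((kChain k σ L (i + 1) j).map (koszulD k σ))
      = finrank k ↥(koszulCycles k σ L i j) := by
  have hBZ : (kChain k σ L (i + 1) j).map (koszulD k σ) ≤ koszulCycles k σ L i j := by
    rintro x ⟨c, hc, rfl⟩
    exact ⟨koszulD_mem_kChain k σ hc, LinearMap.mem_ker.mpr (koszulD_sq k σ c)⟩
  have hq : bettiNumber k σ L i j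
      + finrank k ↥(Submodule.comap (koszulCycles k σ L i j).subtype
        ((kChain k σ L (i + 1) j).map (koszulD k σ)))
      = finrank k ↥(koszulCycles k σ L i j) := Submodule.finrank_quotient_add_finrank _
  have h2 : finrank k ↥(Submodule.comap (koszulCycles k σ L i j).subtype
      ((kChain k σ L (i + 1) j).map (koszulD k σ)))
      = finrank k ↥((kChain k σ L (i + 1) j).map (koszulD k σ)) := by
    rw [← Submodule.finrank_map_subtype_eq (koszulCycles k σ L i j), Submodule.map_comap_subtype,
      inf_eq_right.mpr hBZ]
  rw [h2] at hq
  exact hq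

lemma kChain_inf (J K : Ideal (MvPolynomial σ k)) (i : ℕ) (j : σ →₀ ℕ) :
    kChain k σ (J ⊓ K) i j = kChain k σ J i j ⊓ kChain k σ K i j := by
  ext c
  constructor
  · intro hc
    exact ⟨kChain_mono k σ inf_le_left i j hc, kChain_mono k σ inf_le_right i j hc⟩
  · rintro ⟨h1, h2⟩ S
    exact ⟨(h1 S).1, ⟨(h1 S).2.1, (h2 S).2.1⟩, (h1 S).2.2⟩

lemma kChain_sup {J K : Ideal (MvPolynomial σ k)}
    (hJ : IsMonomialIdeal k σ J) (hK : IsMonomialIdeal k σ K) (i : ℕ) (j : σ →₀ ℕ) :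
    kChain k σ (J + K) i j = kChain k σ J i j ⊔ kChain k σ K i j := by
  classical
  obtain ⟨A, hA⟩ := hJ
  obtain ⟨B, hB⟩ := hK
  refine le_antisymm ?_ (sup_le
    (kChain_mono k σ (by rw [Ideal.add_eq_sup]; exact le_sup_left) i j)
    (kChain_mono k σ (by rw [Ideal.add_eq_sup]; exact le_sup_right) i j))
  intro c hc
  rw [Submodule.mem_sup]
  refine ⟨fun S => if c S ∈ J then c S else 0, ?_, fun S => if c S ∈ J then 0 else c S, ?_, ?_⟩
  · intro S
    simp only
    split_ifs with h
    · exact ⟨(hc S).1, h, (hc S).2.2⟩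
    · exact ⟨fun _ => rfl, J.zero_mem, by simp⟩
  · intro S
    simp only
    split_ifs with h
    · exact ⟨fun _ => rfl, K.zero_mem, by simp⟩
    · refine ⟨(hc S).1, ?_, (hc S).2.2⟩
      -- show `c S ∈ K` from `c S ∈ J + K`, homogeneity and `c S ∉ J`
      have hIK : c S ∈ Ideal.span ((fun m => (monomial m (1 : k) : MvPolynomial σ k)) ''
          (A ∪ B)) := by
        rw [Set.image_union, Ideal.span_union, ← hA, ← hB, ← Ideal.add_eq_sup]
        exact (hc S).2.1
      rw [mem_ideal_span_monomial_image] at hIK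
      have hsing : ∀ m ∈ (c S).support, ∀ m' ∈ (c S).support, m = m' := by
        intro m hm m' hm'
        have e1 := (hc S).2.2 m hm
        have e2 := (hc S).2.2 m' hm'
        exact add_right_cancel (e1.trans e2.symm)
      have hne : (c S).support.Nonempty := by
        rcases Finset.eq_empty_or_nonempty (c S).support with he | hne
        · exact absurd (MvPolynomial.support_eq_empty.mp he ▸ J.zero_mem) h
        · exact hne
      obtain ⟨m₀, hm₀⟩ := hne
      obtain ⟨s, hs, hsle⟩ := hIK m₀ hm₀
      rcases hs with hsA | hsB
      · refine absurd ?_ h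
        rw [hA, mem_ideal_span_monomial_image]
        intro m hm
        exact ⟨s, hsA, hsle.trans_eq (hsing m₀ hm₀ m hm)⟩
      · rw [hB, mem_ideal_span_monomial_image]
        intro m hm
        exact ⟨s, hsB, hsle.trans_eq (hsing m₀ hm₀ m hm)⟩
  · funext S
    by_cases h : c S ∈ J <;> simp [h]

lemma inf_boundaries_le_cycles (J K : Ideal (MvPolynomial σ k)) (i : ℕ) (j : σ →₀ ℕ) :
    (kChain k σ J (i + 1) j).map (koszulD k σ) ⊓ (kChain k σ K (i + 1) j).map (koszulD k σ)
      ≤ koszulCycles k σ (J ⊓ K) i j := by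
  rintro x ⟨hxJ, hxK⟩
  obtain ⟨a, ha, rfl⟩ := hxJ
  obtain ⟨b, hb, hba⟩ := hxK
  refine ⟨?_, LinearMap.mem_ker.mpr (koszulD_sq k σ a)⟩
  rw [kChain_inf]
  exact ⟨koszulD_mem_kChain k σ ha, hba ▸ koszulD_mem_kChain k σ hb⟩

lemma kChain_zero_map_eq_bot (L : Ideal (MvPolynomial σ k)) (j : σ →₀ ℕ) :
    (kChain k σ L 0 j).map (koszulD k σ) = ⊥ := by
  rw [eq_bot_iff]
  rintro x ⟨c, hc, rfl⟩
  rw [Submodule.mem_bot]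
  exact koszulD_kChain_zero k σ hc

lemma koszulHomologyMap_eq_zero_iff {L L' : Ideal (MvPolynomial σ k)} (h : L ≤ L')
    (i : ℕ) (j : σ →₀ ℕ) :
    koszulHomologyMap k σ h i j = 0 ↔
      koszulCycles k σ L i j ≤ (kChain k σ L' (i + 1) j).map (koszulD k σ) := by
  constructor
  · intro h0 x hx
    have hq := DFunLike.congr_fun h0 (Submodule.Quotient.mk ⟨x, hx⟩)
    rw [koszulHomologyMap, Submodule.mapQ_apply, LinearMap.zero_apply,
      Submodule.Quotient.mk_eq_zero, Submodule.mem_comap] at hq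
    simpa using hq
  · intro hle
    refine LinearMap.ext fun y => ?_
    obtain ⟨z, rfl⟩ := Submodule.Quotient.mk_surjective _ y
    rw [koszulHomologyMap, Submodule.mapQ_apply, LinearMap.zero_apply,
      Submodule.Quotient.mk_eq_zero, Submodule.mem_comap]
    simpa using hle z.2

open Module in
lemma key_identity {J K : Ideal (MvPolynomial σ k)} (hJm : IsMonomialIdeal k σ J)
    (hKm : IsMonomialIdeal k σ K) (i : ℕ) (j : σ →₀ ℕ) :
    bettiNumber k σ (J + K) i j
      + finrank k ↥(koszulCycles k σ (J ⊓ K) i j)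
      + (if i = 0 then 0 else finrank k ↥(koszulCycles k σ (J ⊓ K) (i - 1) j))
    = bettiNumber k σ J i j + bettiNumber k σ K i j
      + (if i = 0 then 0 else bettiNumber k σ (J ⊓ K) (i - 1) j)
      + finrank k ↥((kChain k σ J (i + 1) j).map (koszulD k σ)
          ⊓ (kChain k σ K (i + 1) j).map (koszulD k σ))
      + (if i = 0 then 0 else finrank k ↥((kChain k σ J i j).map (koszulD k σ)
          ⊓ (kChain k σ K i j).map (koszulD k σ))) := by
  have hA1 := betti_add_boundary k σ (J + K) i j
  have hA2 := betti_add_boundary k σ J i j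
  have hA3 := betti_add_boundary k σ K i j
  have hB1 := rank_nullity_kChain k σ (J + K) i j
  have hB2 := rank_nullity_kChain k σ J i j
  have hB3 := rank_nullity_kChain k σ K i j
  have hB4 := rank_nullity_kChain k σ (J ⊓ K) i j
  have hC1 : finrank k ↥(kChain k σ (J + K) i j) + finrank k ↥(kChain k σ (J ⊓ K) i j)
      = finrank k ↥(kChain k σ J i j) + finrank k ↥(kChain k σ K i j) := by
    rw [kChain_sup k σ hJm hKm, kChain_inf]
    exact Submodule.finrank_sup_add_finrank_inf_eq _ _
  have hD1 : finrank k ↥((kChain k σ (J + K) (i + 1) j).map (koszulD k σ))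
        + finrank k ↥((kChain k σ J (i + 1) j).map (koszulD k σ)
          ⊓ (kChain k σ K (i + 1) j).map (koszulD k σ))
      = finrank k ↥((kChain k σ J (i + 1) j).map (koszulD k σ))
        + finrank k ↥((kChain k σ K (i + 1) j).map (koszulD k σ)) := by
    rw [kChain_sup k σ hJm hKm, Submodule.map_sup]
    exact Submodule.finrank_sup_add_finrank_inf_eq _ _
  rcases Nat.eq_zero_or_pos i with rfl | hpos
  · simp only [reduceIte]
    have hr0 : ∀ L : Ideal (MvPolynomial σ k),
        finrank k ↥((kChain k σ L 0 j).map (koszulD k σ)) = 0 := fun L => by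
      rw [kChain_zero_map_eq_bot]; exact finrank_bot k _
    have h1 := hr0 (J + K); have h2 := hr0 J; have h3 := hr0 K; have h4 := hr0 (J ⊓ K)
    omega
  · obtain ⟨m, rfl⟩ : ∃ m, i = m + 1 := ⟨i - 1, by omega⟩
    simp only [if_neg (Nat.succ_ne_zero m), Nat.add_sub_cancel, Nat.succ_sub_one]
    have hA4 := betti_add_boundary k σ (J ⊓ K) m j
    have hB5 := rank_nullity_kChain k σ (J ⊓ K) m j
    have hD2 : finrank k ↥((kChain k σ (J + K) (m + 1) j).map (koszulD k σ))
          + finrank k ↥((kChain k σ J (m + 1) j).map (koszulD k σ)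
            ⊓ (kChain k σ K (m + 1) j).map (koszulD k σ))
        = finrank k ↥((kChain k σ J (m + 1) j).map (koszulD k σ))
          + finrank k ↥((kChain k σ K (m + 1) j).map (koszulD k σ)) := by
      rw [kChain_sup k σ hJm hKm, Submodule.map_sup]
      exact Submodule.finrank_sup_add_finrank_inf_eq _ _
    omega

open Module

/-- with `G(I)` the disjoint union of `G(J)` and `G(K)`, the decomposition
`I = J + K` is a Betti splitting if and only if, for all homological degrees `i` and all
multidegrees `j`, the map `Tor_i(k, J∩K)_j → Tor_i(k, J)_j ⊕ Tor_i(k, K)_j`,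
`f ↦ (f, -f)`, induced by the short exact sequence `0 → J∩K → J ⊕ K → I → 0`,
is the zero map. -/
theorem betti_splitting_iff_tor_maps_zero
    {k : Type*} [Field k] {n : ℕ}
    (I J K : Ideal (MvPolynomial (Fin n) k))
    (hI : IsMonomialIdeal k (Fin n) I) (hJ : IsMonomialIdeal k (Fin n) J)
    (hK : IsMonomialIdeal k (Fin n) K)
    (hsum : I = J + K)
    (hgens : minGens k (Fin n) I = minGens k (Fin n) J ∪ minGens k (Fin n) K)
    (hdisj : Disjoint (minGens k (Fin n) J) (minGens k (Fin n) K)) :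
    IsBettiSplitting k (Fin n) J K ↔
      ∀ (i : ℕ) (j : Fin n →₀ ℕ),
        (LinearMap.prod
          (koszulHomologyMap k (Fin n) (inf_le_left : J ⊓ K ≤ J) i j)
          (-(koszulHomologyMap k (Fin n) (inf_le_right : J ⊓ K ≤ K) i j))) = 0 := by
    classical
  have hpair : ∀ (i : ℕ) (j : Fin n →₀ ℕ),
      (LinearMap.prod
          (koszulHomologyMap k (Fin n) (inf_le_left : J ⊓ K ≤ J) i j)
          (-(koszulHomologyMap k (Fin n) (inf_le_right : J ⊓ K ≤ K) i j))) = 0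
      ↔ koszulCycles k (Fin n) (J ⊓ K) i j
          ≤ (kChain k (Fin n) J (i + 1) j).map (koszulD k (Fin n))
            ⊓ (kChain k (Fin n) K (i + 1) j).map (koszulD k (Fin n)) := by
    intro i j
    rw [le_inf_iff, ← koszulHomologyMap_eq_zero_iff k (Fin n) inf_le_left i j,
      ← koszulHomologyMap_eq_zero_iff k (Fin n) inf_le_right i j]
    constructor
    · intro h
      constructor
      · refine LinearMap.ext fun x => ?_
        exact congrArg Prod.fst (DFunLike.congr_fun h x)
      · refine LinearMap.ext fun x => ?_
        have h2 : (-(koszulHomologyMap k (Fin n) (inf_le_right : J ⊓ K ≤ K) i j)) x = 0 :=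
          congrArg Prod.snd (DFunLike.congr_fun h x)
        rw [LinearMap.neg_apply] at h2
        exact neg_eq_zero.mp h2
    · rintro ⟨h1, h2⟩
      refine LinearMap.ext fun x => ?_
      rw [LinearMap.prod_apply, h1, h2]
      simp
  have hle : ∀ (m : ℕ) (j : Fin n →₀ ℕ),
      finrank k ↥((kChain k (Fin n) J (m + 1) j).map (koszulD k (Fin n))
          ⊓ (kChain k (Fin n) K (m + 1) j).map (koszulD k (Fin n)))
        ≤ finrank k ↥(koszulCycles k (Fin n) (J ⊓ K) m j) :=
    fun m j => Submodule.finrank_mono (inf_boundaries_le_cycles k (Fin n) J K m j)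
  constructor
  · intro hsplit i j
    rw [hpair i j]
    have hkey := key_identity k (Fin n) hJ hK i j
    have hs := hsplit i j
    suffices heq : finrank k ↥((kChain k (Fin n) J (i + 1) j).map (koszulD k (Fin n))
          ⊓ (kChain k (Fin n) K (i + 1) j).map (koszulD k (Fin n)))
        = finrank k ↥(koszulCycles k (Fin n) (J ⊓ K) i j) by
      exact (Submodule.eq_of_le_of_finrank_eq
        (inf_boundaries_le_cycles k (Fin n) J K i j) heq).ge
    have h1 := hle i j
    rcases Nat.eq_zero_or_pos i with rfl | hpos
    · simp only [reduceIte] at hkey hs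
      omega
    · obtain ⟨m, rfl⟩ : ∃ m, i = m + 1 := ⟨i - 1, by omega⟩
      simp only [if_neg (Nat.succ_ne_zero m), Nat.add_sub_cancel, Nat.succ_sub_one]
        at hkey hs
      have h2 := hle m j
      omega
  · intro hz i j
    have hkey := key_identity k (Fin n) hJ hK i j
    have he : ∀ m : ℕ,
        finrank k ↥(koszulCycles k (Fin n) (J ⊓ K) m j)
          = finrank k ↥((kChain k (Fin n) J (m + 1) j).map (koszulD k (Fin n))
            ⊓ (kChain k (Fin n) K (m + 1) j).map (koszulD k (Fin n))) := by
      intro m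
      haveI : FiniteDimensional k
          ↥((kChain k (Fin n) J (m + 1) j).map (koszulD k (Fin n))
            ⊓ (kChain k (Fin n) K (m + 1) j).map (koszulD k (Fin n))) :=
        Submodule.finiteDimensional_of_le inf_le_left
      exact le_antisymm (Submodule.finrank_mono ((hpair m j).mp (hz m j))) (hle m j)
    show bettiNumber k (Fin n) (J + K) i j
        = bettiNumber k (Fin n) J i j + bettiNumber k (Fin n) K i j
          + (if i = 0 then 0 else bettiNumber k (Fin n) (J ⊓ K) (i - 1) j)
    rcases Nat.eq_zero_or_pos i with rfl | hpos
    · simp only [reduceIte] at hkey ⊢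
      have h1 := he 0
      omega
    · obtain ⟨m, rfl⟩ : ∃ m, i = m + 1 := ⟨i - 1, by omega⟩
      simp only [if_neg (Nat.succ_ne_zero m), Nat.add_sub_cancel, Nat.succ_sub_one]
        at hkey ⊢
      have h1 := he (m + 1)
      have h2 := he m
      omega
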